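/- arXiv:2304.01787 — 3 statements merged into one kernel-verified Lean document; each statement's English description precedes it below -/
import Mathlib

section
/- Let G be a finite abelian group and let k, r be integers with 2 ≤ k and 2k ≤ r. For X drawn from the planted distribution D1 on G^r, the number of k-SUM solutions satisfies Var(c(X)) < (C(r,k)/|G|)·(1 + 2^k·k²/r). -/
open Finset

/-- Number of k-SUM solutions of an instance `X ∈ G^r`: the number of `k`-element
subsets `S ⊆ {1,…,r}` with `∑_{i∈S} X i = 0`. -/
def numSol {G : Type} [AddCommGroup G] [DecidableEq G] (k : ℕ) {r : ℕ} (X : Fin r → G) : ℕ :=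
  (((univ : Finset (Fin r)).powersetCard k).filter (fun S => ∑ i ∈ S, X i = 0)).card

/-- Plant a solution at `S`: replace the entry at the smallest index `i` of `S` by
`-∑_{j∈S, j≠i} Y j`. -/
def plant {G : Type} [AddCommGroup G] {r : ℕ} (Y : Fin r → G) (S : Finset (Fin r)) :
    Fin r → G :=
  fun j =>
    if hS : S.Nonempty then
      if j = S.min' hS then -∑ i ∈ S.erase (S.min' hS), Y i else Y j
    else Y j

/-- The probability mass function of the planted distribution `D1` on `G^r`:
draw `Y` uniformly from `G^r` and an independent uniformly random `k`-element
subset `S`, and output `plant Y S`. -/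
noncomputable def D1pmf {G : Type} [AddCommGroup G] [Fintype G] [DecidableEq G] (k : ℕ)
    {r : ℕ} (X : Fin r → G) : ℝ :=
  (((univ : Finset ((Fin r → G) × Finset (Fin r))).filter
      (fun p => p.2.card = k ∧ plant p.1 p.2 = X)).card : ℝ)
    / ((Fintype.card G : ℝ) ^ r * (r.choose k : ℝ))

/-- Expectation of the number of k-SUM solutions under the planted distribution `D1`. -/
noncomputable def expD1 (G : Type) [AddCommGroup G] [Fintype G] [DecidableEq G]
    (k r : ℕ) : ℝ :=
  ∑ X : Fin r → G, D1pmf k X * (numSol k X : ℝ)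

/-- Variance of the number of k-SUM solutions under the planted distribution `D1`. -/
noncomputable def varD1 (G : Type) [AddCommGroup G] [Fintype G] [DecidableEq G]
    (k r : ℕ) : ℝ :=
  ∑ X : Fin r → G, D1pmf k X * ((numSol k X : ℝ) - expD1 G k r) ^ 2

open scoped symmDiff

/-!
Averaging over the planted set, it suffices to fix a `k`-set `S` and study `c(plant Y S)` for
uniform `Y ∈ G^r`. The map `Y ↦ ∑_{i∈T} plant Y S i` is additive, and translating a
coordinate `j ∈ T \ S` translates it, so for every `k`-set `T ≠ S` the event "`T` sums to zero"
has probability `1/|G|`; two such events for `T, U ≠ S` are independent unless `T ∆ U ⊆ S`.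
Hence `E c = 1 + (C(r,k) - 1)/|G|` and `Var c ≤ D/|G|`, where `D = #(dependentPairs k S)`.
A pair in `D` is either diagonal or is determined by `T` and `T ∆ U ⊆ S`, and then `T` meets
`S`; by a union bound over the points of `S` at most `k² C(r,k)/r` such `T` exist, so
`D ≤ C(r,k) - 1 + 2^k k² C(r,k)/r`.
-/

section Plant

variable {G : Type} [AddCommGroup G] {r : ℕ}

theorem plant_add (Y Z : Fin r → G) (S : Finset (Fin r)) :
    plant (Y + Z) S = plant Y S + plant Z S := by
  funext i
  simp only [plant, Pi.add_apply]
  split_ifs <;> simp [sum_add_distrib, add_comm]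

theorem plant_single_of_notMem {S : Finset (Fin r)} {j : Fin r} (hj : j ∉ S) (a : G) :
    plant (Pi.single j a) S = Pi.single j a := by
  funext i
  unfold plant
  split_ifs with hS hi
  · have hjm : j ≠ S.min' hS := fun h => hj (h ▸ S.min'_mem hS)
    rw [Finset.sum_pi_single', if_neg (fun h => hj (mem_of_mem_erase h)), hi,
      Pi.single_eq_of_ne' hjm, neg_zero]
  · rfl
  · rfl

theorem sum_plant_self (Y : Fin r → G) {S : Finset (Fin r)} (hS : S.Nonempty) :
    ∑ i ∈ S, plant Y S i = 0 := by
  rw [← add_sum_erase _ _ (S.min'_mem hS),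
    ← neg_add_cancel (∑ i ∈ S.erase (S.min' hS), Y i)]
  congr 1
  · simp [plant, hS]
  · refine sum_congr rfl fun i hi => ?_
    simp [plant, hS, ne_of_mem_erase hi]

theorem sum_plant_add_single {S : Finset (Fin r)} {j : Fin r} (hj : j ∉ S) (T : Finset (Fin r))
    (Y : Fin r → G) (a : G) :
    ∑ i ∈ T, plant (Y + Pi.single j a) S i
      = ∑ i ∈ T, plant Y S i + if j ∈ T then a else 0 := by
  simp only [plant_add, plant_single_of_notMem hj, Pi.add_apply, sum_add_distrib,
    Finset.sum_pi_single']

end Plant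

theorem card_filter_eq_zero_and_mul_card {ι G : Type*} [Fintype ι] [DecidableEq ι]
    [AddCommGroup G] [Fintype G] [DecidableEq G] (j : ι) (f : (ι → G) → G)
    (hf : ∀ Y a, f (Y + Pi.single j a) = f Y + a) (P : (ι → G) → Prop) [DecidablePred P]
    (hP : ∀ Y a, P (Y + Pi.single j a) ↔ P Y) :
    #{Y | f Y = 0 ∧ P Y} * Fintype.card G = #{Y | P Y} := by
  have fiber (b : G) : #{Y ∈ {Y | P Y} | f Y = b} = #{Y | f Y = 0 ∧ P Y} := by
    have hsub (Y : ι → G) : Y - Pi.single j b = Y + Pi.single j (-b) := by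
      rw [Pi.single_neg, sub_eq_add_neg]
    refine card_nbij' (· - Pi.single j b) (· + Pi.single j b) (fun Y hY => ?_) (fun Y hY => ?_)
      (fun _ _ => by simp) (fun _ _ => by simp) <;>
    simp_all
  rw [card_eq_sum_card_fiberwise (s := {Y | P Y}) (t := univ) (f := f)
      (fun _ _ => mem_coe.2 (mem_univ _)),
    sum_congr rfl fun b _ => fiber b, sum_const, card_univ, smul_eq_mul, mul_comm]

theorem card_filter_eq_zero_mul_card {ι G : Type*} [Fintype ι] [DecidableEq ι]
    [AddCommGroup G] [Fintype G] [DecidableEq G] (j : ι) (f : (ι → G) → G)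
    (hf : ∀ Y a, f (Y + Pi.single j a) = f Y + a) :
    #{Y | f Y = 0} * Fintype.card G = Fintype.card G ^ Fintype.card ι := by
  simpa using card_filter_eq_zero_and_mul_card j f hf (fun _ => True) (fun _ _ => Iff.rfl)

section KSubsets

variable {α : Type*} [Fintype α] [DecidableEq α] {k : ℕ}

theorem card_erase_powersetCard_univ {S : Finset α} (hS : S ∈ powersetCard k univ) :
    (#((powersetCard k univ).erase S) : ℝ) = (Fintype.card α).choose k - 1 := by
  have hpos : 1 ≤ #(powersetCard k (univ : Finset α)) := card_pos.2 ⟨S, hS⟩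
  rw [card_erase_of_mem hS, Nat.cast_sub hpos, card_powersetCard, card_univ, Nat.cast_one]

theorem not_subset_of_mem_erase_powersetCard {S T : Finset α}
    (hS : S ∈ powersetCard k univ) (hT : T ∈ (powersetCard k univ).erase S) : ¬T ⊆ S :=
  fun hTS => ne_of_mem_erase hT <| eq_of_subset_of_card_le hTS
    ((mem_powersetCard.1 hS).2.trans (mem_powersetCard.1 (mem_of_mem_erase hT)).2.symm).le

def dependentPairs (k : ℕ) (S : Finset α) : Finset (Finset α × Finset α) :=
  {p ∈ (powersetCard k univ).erase S ×ˢ (powersetCard k univ).erase S | p.1 ∆ p.2 ⊆ S}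

theorem card_filter_mem_powersetCard_mul_le (x : α) :
    #{T ∈ powersetCard k (univ : Finset α) | x ∈ T} * Fintype.card α
      ≤ k * (Fintype.card α).choose k := by
  cases k with
  | zero => simp [card_eq_zero]
  | succ j =>
    have hsub : {T ∈ powersetCard (j + 1) (univ : Finset α) | x ∈ T}
        ⊆ (powersetCard j (univ.erase x)).image (insert x) := by
      intro T hT
      obtain ⟨hT, hxT⟩ := mem_filter.1 hT
      refine mem_image.2 ⟨T.erase x, mem_powersetCard.2 ⟨?_, ?_⟩, insert_erase hxT⟩
      · exact erase_subset_erase _ (subset_univ _)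
      · rw [card_erase_of_mem hxT, (mem_powersetCard.1 hT).2, Nat.add_sub_cancel]
    obtain ⟨m, hm⟩ := Nat.exists_eq_add_one_of_ne_zero (Fintype.card_pos_iff.2 ⟨x⟩).ne'
    calc #{T ∈ powersetCard (j + 1) univ | x ∈ T} * Fintype.card α
        ≤ m.choose j * (m + 1) := by
          rw [hm]
          gcongr
          refine (card_le_card hsub).trans (card_image_le.trans_eq ?_)
          rw [card_powersetCard, card_erase_of_mem (mem_univ x), card_univ, hm, Nat.add_sub_cancel]
      _ = (j + 1) * (Fintype.card α).choose (j + 1) := by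
          rw [hm, mul_comm, Nat.add_one_mul_choose_eq, mul_comm]

theorem card_filter_inter_nonempty_mul_le (S : Finset α) :
    #{T ∈ powersetCard k (univ : Finset α) | (T ∩ S).Nonempty} * Fintype.card α
      ≤ #S * k * (Fintype.card α).choose k := by
  have hsub : {T ∈ powersetCard k (univ : Finset α) | (T ∩ S).Nonempty}
      ⊆ S.biUnion fun x => {T ∈ powersetCard k univ | x ∈ T} := by
    intro T hT
    obtain ⟨hT, x, hx⟩ := mem_filter.1 hT
    exact mem_biUnion.2 ⟨x, (mem_inter.1 hx).2, mem_filter.2 ⟨hT, (mem_inter.1 hx).1⟩⟩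
  calc #{T ∈ powersetCard k univ | (T ∩ S).Nonempty} * Fintype.card α
      ≤ (∑ x ∈ S, #{T ∈ powersetCard k univ | x ∈ T}) * Fintype.card α := by
        gcongr
        exact (card_le_card hsub).trans card_biUnion_le
    _ ≤ ∑ _x ∈ S, k * (Fintype.card α).choose k := by
        rw [sum_mul]
        exact sum_le_sum fun x _ => card_filter_mem_powersetCard_mul_le x
    _ = #S * k * (Fintype.card α).choose k := by rw [sum_const, smul_eq_mul, mul_assoc]

theorem card_filter_ne_dependentPairs_le (S : Finset α) :
    #{p ∈ dependentPairs k S | p.1 ≠ p.2}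
      ≤ #{T ∈ powersetCard k univ | (T ∩ S).Nonempty} * 2 ^ #S := by
  rw [← card_powerset, ← card_product]
  refine card_le_card_of_injOn (fun p => (p.1, p.1 ∆ p.2)) ?_ ?_
  · intro p hp
    simp only [dependentPairs, coe_filter, mem_filter, mem_product, mem_erase,
      Set.mem_ofPred_eq] at hp
    obtain ⟨⟨⟨⟨-, hT⟩, -, hU⟩, hTU⟩, hne⟩ := hp
    obtain ⟨x, hxT, hxU⟩ := not_subset.1 fun h => hne <| eq_of_subset_of_card_le h
      ((mem_powersetCard.1 hU).2.trans (mem_powersetCard.1 hT).2.symm).le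
    have hxS : x ∈ S := hTU (mem_symmDiff.2 (Or.inl ⟨hxT, hxU⟩))
    simp only [coe_product, coe_filter, Set.mem_prod, Set.mem_ofPred_eq, coe_powerset,
      Set.mem_preimage, Set.mem_powerset_iff, coe_subset]
    exact ⟨⟨hT, x, mem_inter.2 ⟨hxT, hxS⟩⟩, hTU⟩
  · intro p _ q _ h
    simp only [Prod.mk.injEq] at h
    ext1
    · exact h.1
    · have h2 := symmDiff_symmDiff_cancel_left p.1 p.2
      rwa [h.2, h.1, symmDiff_symmDiff_cancel_left, eq_comm] at h2

theorem card_dependentPairs_mul_le {S : Finset α} (hS : S ∈ powersetCard k univ) :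
    (#(dependentPairs k S) : ℝ) * Fintype.card α
      ≤ ((Fintype.card α).choose k - 1) * Fintype.card α
        + 2 ^ k * k ^ 2 * (Fintype.card α).choose k := by
  set M := #{T ∈ powersetCard k (univ : Finset α) | (T ∩ S).Nonempty}
  have hSk : #S = k := (mem_powersetCard.1 hS).2
  have hdiag :
      (#{p ∈ dependentPairs k S | p.1 = p.2} : ℝ) ≤ (Fintype.card α).choose k - 1 := by
    rw [← card_erase_powersetCard_univ hS, ← diag_card ((powersetCard k univ).erase S)]
    refine Nat.cast_le.2 (card_le_card fun p hp => ?_)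
    simp only [dependentPairs, mem_filter, mem_product] at hp
    exact mem_diag.2 ⟨hp.1.1.1, hp.2⟩
  have hoff : (#{p ∈ dependentPairs k S | ¬p.1 = p.2} : ℝ) ≤ M * 2 ^ k := by
    exact_mod_cast hSk ▸ card_filter_ne_dependentPairs_le S
  have hM : (M : ℝ) * Fintype.card α ≤ k * k * (Fintype.card α).choose k := by
    exact_mod_cast hSk ▸ card_filter_inter_nonempty_mul_le S
  rw [← card_filter_add_card_filter_not (fun p : Finset α × Finset α => p.1 = p.2),
    Nat.cast_add]
  calc ((#{p ∈ dependentPairs k S | p.1 = p.2} : ℝ) + #{p ∈ dependentPairs k S | ¬p.1 = p.2})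
        * Fintype.card α
      ≤ ((Fintype.card α).choose k - 1) * Fintype.card α + 2 ^ k * (M * Fintype.card α) := by
        rw [add_mul, ← mul_assoc, mul_comm _ (M : ℝ)]
        gcongr
    _ ≤ ((Fintype.card α).choose k - 1) * Fintype.card α
        + 2 ^ k * (k * k * (Fintype.card α).choose k) := by gcongr
    _ = _ := by ring

end KSubsets

theorem numSol_eq_sum {G : Type} [AddCommGroup G] [DecidableEq G] {r : ℕ} (k : ℕ)
    (X : Fin r → G) :
    (numSol k X : ℝ) = ∑ T ∈ powersetCard k univ, if ∑ i ∈ T, X i = 0 then 1 else 0 := by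
  rw [numSol, natCast_card_filter]

section PlantedCounts

variable {G : Type} [AddCommGroup G] [Fintype G] [DecidableEq G] {r k : ℕ}

theorem card_sum_plant_eq_zero_mul_card {S T : Finset (Fin r)} (hT : ¬T ⊆ S) :
    #{Y : Fin r → G | ∑ i ∈ T, plant Y S i = 0} * Fintype.card G = Fintype.card G ^ r := by
  obtain ⟨j, hjT, hjS⟩ := not_subset.1 hT
  simpa using card_filter_eq_zero_mul_card j (fun Y => ∑ i ∈ T, plant Y S i)
    fun Y a => by rw [sum_plant_add_single hjS, if_pos hjT]

theorem card_sum_plant_pair_mul_sq_of_mem {S T U : Finset (Fin r)} {j j' : Fin r}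
    (hjT : j ∈ T) (hjU : j ∉ U) (hjS : j ∉ S) (hj'U : j' ∈ U) (hj'S : j' ∉ S) :
    #{Y : Fin r → G | ∑ i ∈ T, plant Y S i = 0 ∧ ∑ i ∈ U, plant Y S i = 0}
      * Fintype.card G ^ 2 = Fintype.card G ^ r := by
  have hU := card_sum_plant_eq_zero_mul_card (G := G) (S := S) (not_subset.2 ⟨j', hj'U, hj'S⟩)
  rw [← hU, sq, ← mul_assoc, card_filter_eq_zero_and_mul_card j _
    (fun Y a => by rw [sum_plant_add_single hjS, if_pos hjT]) _
    (fun Y a => by rw [sum_plant_add_single hjS, if_neg hjU, add_zero])]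

theorem card_sum_plant_pair_mul_sq {S T U : Finset (Fin r)} (hT : ¬T ⊆ S) (hU : ¬U ⊆ S)
    (hTU : ¬T ∆ U ⊆ S) :
    #{Y : Fin r → G | ∑ i ∈ T, plant Y S i = 0 ∧ ∑ i ∈ U, plant Y S i = 0}
      * Fintype.card G ^ 2 = Fintype.card G ^ r := by
  obtain ⟨j, hj, hjS⟩ := not_subset.1 hTU
  rcases mem_symmDiff.1 hj with ⟨hjT, hjU⟩ | ⟨hjU, hjT⟩
  · obtain ⟨j', hj'U, hj'S⟩ := not_subset.1 hU
    exact card_sum_plant_pair_mul_sq_of_mem hjT hjU hjS hj'U hj'S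
  · obtain ⟨j', hj'T, hj'S⟩ := not_subset.1 hT
    simpa only [and_comm] using card_sum_plant_pair_mul_sq_of_mem (G := G) hjU hjT hjS hj'T hj'S

theorem card_sum_plant_eq_zero_of_mem_erase {S T : Finset (Fin r)}
    (hS : S ∈ powersetCard k univ) (hT : T ∈ (powersetCard k univ).erase S) :
    (#{Y : Fin r → G | ∑ i ∈ T, plant Y S i = 0} : ℝ)
      = (Fintype.card G : ℝ) ^ r / Fintype.card G := by
  rw [eq_div_iff (by positivity)]
  exact_mod_cast card_sum_plant_eq_zero_mul_card (not_subset_of_mem_erase_powersetCard hS hT)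

theorem sum_card_sum_plant_eq_zero (hk : k ≠ 0) {S : Finset (Fin r)}
    (hS : S ∈ powersetCard k univ) :
    ∑ T ∈ powersetCard k univ, (#{Y : Fin r → G | ∑ i ∈ T, plant Y S i = 0} : ℝ)
      = (Fintype.card G : ℝ) ^ r * (1 + ((r.choose k : ℝ) - 1) / Fintype.card G) := by
  have hSne : S.Nonempty := card_pos.1 ((mem_powersetCard.1 hS).2 ▸ Nat.pos_of_ne_zero hk)
  have hSS :
      (#{Y : Fin r → G | ∑ i ∈ S, plant Y S i = 0} : ℝ) = (Fintype.card G : ℝ) ^ r := by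
    simp [sum_plant_self _ hSne]
  rw [← add_sum_erase _ _ hS, hSS,
    sum_congr rfl fun T hT => card_sum_plant_eq_zero_of_mem_erase hS hT, sum_const,
    nsmul_eq_mul, card_erase_powersetCard_univ hS, Fintype.card_fin]
  ring

theorem sum_numSol_plant (hk : k ≠ 0) {S : Finset (Fin r)} (hS : S ∈ powersetCard k univ) :
    ∑ Y : Fin r → G, (numSol k (plant Y S) : ℝ)
      = (Fintype.card G : ℝ) ^ r * (1 + ((r.choose k : ℝ) - 1) / Fintype.card G) := by
  simp_rw [numSol_eq_sum]
  rw [sum_comm, ← sum_card_sum_plant_eq_zero hk hS]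
  simp only [sum_boole]

theorem card_sum_plant_pair_le {S T U : Finset (Fin r)} (hS : S ∈ powersetCard k univ)
    (hT : T ∈ (powersetCard k univ).erase S) (hU : U ∈ (powersetCard k univ).erase S) :
    (#{Y : Fin r → G | ∑ i ∈ T, plant Y S i = 0 ∧ ∑ i ∈ U, plant Y S i = 0} : ℝ)
      ≤ (Fintype.card G : ℝ) ^ r / (Fintype.card G) ^ 2
        + if T ∆ U ⊆ S then (Fintype.card G : ℝ) ^ r / Fintype.card G else 0 := by
  split_ifs with hTU
  · calc (#{Y : Fin r → G | ∑ i ∈ T, plant Y S i = 0 ∧ ∑ i ∈ U, plant Y S i = 0} : ℝ)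
        ≤ #{Y : Fin r → G | ∑ i ∈ T, plant Y S i = 0} := by
          exact_mod_cast card_le_card (monotone_filter_right _ fun _ _ => And.left)
      _ = (Fintype.card G : ℝ) ^ r / Fintype.card G := card_sum_plant_eq_zero_of_mem_erase hS hT
      _ ≤ _ := le_add_of_nonneg_left (by positivity)
  · rw [add_zero, le_div_iff₀ (by positivity)]
    exact_mod_cast (card_sum_plant_pair_mul_sq (not_subset_of_mem_erase_powersetCard hS hT)
      (not_subset_of_mem_erase_powersetCard hS hU) hTU).le

theorem sum_sum_card_sum_plant_pair_le {S : Finset (Fin r)} (hS : S ∈ powersetCard k univ) :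
    ∑ T ∈ (powersetCard k univ).erase S, ∑ U ∈ (powersetCard k univ).erase S,
        (#{Y : Fin r → G | ∑ i ∈ T, plant Y S i = 0 ∧ ∑ i ∈ U, plant Y S i = 0} : ℝ)
      ≤ (Fintype.card G : ℝ) ^ r
          * ((((r.choose k : ℝ) - 1) / Fintype.card G) ^ 2
            + #(dependentPairs k S) / Fintype.card G) := by
  refine (sum_le_sum fun T hT => sum_le_sum fun U hU => card_sum_plant_pair_le hS hT hU).trans_eq ?_
  rw [← sum_product' (f := fun T U => _ + if T ∆ U ⊆ S then _ else 0), sum_add_distrib,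
    sum_ite, sum_const_zero, add_zero, sum_const, sum_const, card_product, nsmul_eq_mul,
    nsmul_eq_mul, Nat.cast_mul, card_erase_powersetCard_univ hS, Fintype.card_fin,
    ← dependentPairs]
  ring

theorem sum_numSol_plant_sq_le (hk : k ≠ 0) {S : Finset (Fin r)}
    (hS : S ∈ powersetCard k univ) :
    ∑ Y : Fin r → G, (numSol k (plant Y S) : ℝ) ^ 2
      ≤ (Fintype.card G : ℝ) ^ r
          * ((1 + ((r.choose k : ℝ) - 1) / Fintype.card G) ^ 2
            + #(dependentPairs k S) / Fintype.card G) := by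
  have hSne : S.Nonempty := card_pos.1 ((mem_powersetCard.1 hS).2 ▸ Nat.pos_of_ne_zero hk)
  set K := powersetCard k (univ : Finset (Fin r))
  set n : Finset (Fin r) → Finset (Fin r) → ℝ := fun T U =>
    #{Y : Fin r → G | ∑ i ∈ T, plant Y S i = 0 ∧ ∑ i ∈ U, plant Y S i = 0} with hn
  have hnS (T : Finset (Fin r)) : n S T = #{Y : Fin r → G | ∑ i ∈ T, plant Y S i = 0} ∧
      n T S = #{Y : Fin r → G | ∑ i ∈ T, plant Y S i = 0} := by
    simp [hn, sum_plant_self _ hSne]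
  calc ∑ Y : Fin r → G, (numSol k (plant Y S) : ℝ) ^ 2
      = ∑ T ∈ K, ∑ U ∈ K, n T U := by
        simp_rw [sq, numSol_eq_sum, sum_mul_sum, ite_zero_mul_ite_zero, mul_one]
        rw [sum_comm]
        refine sum_congr rfl fun T _ => ?_
        rw [sum_comm]
        simp only [hn, sum_boole, K]
    _ = ∑ U ∈ K, n S U + ∑ T ∈ K.erase S, n T S
          + ∑ T ∈ K.erase S, ∑ U ∈ K.erase S, n T U := by
        rw [← add_sum_erase _ _ hS, add_assoc, ← sum_add_distrib]
        congr 1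
        exact sum_congr rfl fun T _ => (add_sum_erase _ _ hS).symm
    _ ≤ _ := by
        simp only [hnS]
        rw [sum_card_sum_plant_eq_zero hk hS,
          sum_congr rfl fun T hT => card_sum_plant_eq_zero_of_mem_erase hS hT, sum_const,
          nsmul_eq_mul, card_erase_powersetCard_univ hS, Fintype.card_fin]
        linear_combination sum_sum_card_sum_plant_pair_le (G := G) hS

theorem sum_numSol_plant_sub_sq_le (hk : k ≠ 0) {S : Finset (Fin r)}
    (hS : S ∈ powersetCard k univ) :
    ∑ Y : Fin r → G,
        ((numSol k (plant Y S) : ℝ) - (1 + ((r.choose k : ℝ) - 1) / Fintype.card G)) ^ 2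
      ≤ (Fintype.card G : ℝ) ^ r * (#(dependentPairs k S) / Fintype.card G) := by
  simp only [sub_sq, sum_add_distrib, sum_sub_distrib, ← sum_mul, ← mul_sum, sum_const,
    card_univ, Fintype.card_fun, Fintype.card_fin, nsmul_eq_mul, sum_numSol_plant hk hS]
  push_cast
  linear_combination sum_numSol_plant_sq_le (G := G) hk hS

end PlantedCounts

section PlantedDistribution

variable {G : Type} [AddCommGroup G] [Fintype G] [DecidableEq G] {r k : ℕ}

theorem sum_D1pmf_mul (φ : (Fin r → G) → ℝ) :
    ∑ X, D1pmf k X * φ X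
      = (∑ S ∈ powersetCard k univ, ∑ Y, φ (plant Y S))
          / ((Fintype.card G : ℝ) ^ r * r.choose k) := by
  simp only [D1pmf, div_mul_eq_mul_div, ← sum_div, ← filter_filter]
  congr 1
  simp_rw [← nsmul_eq_mul, ← sum_const]
  rw [sum_fiberwise', powersetCard_eq_filter, powerset_univ, sum_filter, sum_filter,
    Fintype.sum_prod_type_right]
  simp only [sum_ite_irrel, sum_const_zero]

theorem expD1_eq (hk : k ≠ 0) (hkr : k ≤ r) :
    expD1 G k r = 1 + ((r.choose k : ℝ) - 1) / Fintype.card G := by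
  have hN : (r.choose k : ℝ) ≠ 0 := by exact_mod_cast (Nat.choose_pos hkr).ne'
  rw [expD1, sum_D1pmf_mul, sum_congr rfl fun S hS => sum_numSol_plant hk hS, sum_const,
    card_powersetCard, card_univ, Fintype.card_fin, nsmul_eq_mul]
  field_simp

theorem varD1_le (hk : k ≠ 0) (hkr : k ≤ r) {B : ℝ}
    (hB : ∀ S ∈ powersetCard k (univ : Finset (Fin r)), (#(dependentPairs k S) : ℝ) ≤ B) :
    varD1 G k r ≤ B / Fintype.card G := by
  have hN : (r.choose k : ℝ) ≠ 0 := by exact_mod_cast (Nat.choose_pos hkr).ne'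
  rw [varD1, expD1_eq hk hkr, sum_D1pmf_mul]
  calc (∑ S ∈ powersetCard k univ, ∑ Y : Fin r → G,
        ((numSol k (plant Y S) : ℝ) - (1 + ((r.choose k : ℝ) - 1) / Fintype.card G)) ^ 2)
        / ((Fintype.card G : ℝ) ^ r * r.choose k)
      ≤ (∑ S ∈ powersetCard k (univ : Finset (Fin r)),
          (Fintype.card G : ℝ) ^ r * (B / Fintype.card G))
        / ((Fintype.card G : ℝ) ^ r * r.choose k) := by
        gcongr with S hS
        exact (sum_numSol_plant_sub_sq_le hk hS).trans (by gcongr; exact hB S hS)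
    _ = B / Fintype.card G := by
        rw [sum_const, card_powersetCard, card_univ, Fintype.card_fin, nsmul_eq_mul]
        field_simp

end PlantedDistribution

/-- **Variance of the number of solutions under the planted distribution.**
For `2 ≤ k` and `2k ≤ r`, and `X ∼ D1`,
`Var(c(X)) < (C(r,k)/|G|)·(1 + 2^k·k²/r)`. -/
theorem numSol_variance_planted
    (G : Type) [AddCommGroup G] [Fintype G] [DecidableEq G]
    (k r : ℕ) (hk : 2 ≤ k) (hkr : 2 * k ≤ r) :
    varD1 G k r
      < ((r.choose k : ℝ) / (Fintype.card G : ℝ))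
          * (1 + (2 : ℝ) ^ k * (k : ℝ) ^ 2 / (r : ℝ)) := by
  have hr : (0 : ℝ) < r := by exact_mod_cast (by omega : 0 < r)
  have hq : (0 : ℝ) < Fintype.card G := by exact_mod_cast Fintype.card_pos
  calc varD1 G k r
      ≤ ((r.choose k : ℝ) - 1 + 2 ^ k * k ^ 2 * r.choose k / r) / Fintype.card G := by
        refine varD1_le (by omega) (by omega) fun S hS => ?_
        have h := card_dependentPairs_mul_le hS
        rw [Fintype.card_fin] at h
        rw [add_div' _ _ _ hr.ne', le_div_iff₀ hr]
        linarith
    _ < ((r.choose k : ℝ) + 2 ^ k * k ^ 2 * r.choose k / r) / Fintype.card G := by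
        gcongr
        linarith
    _ = _ := by ring
end

section
/- Let G be a finite abelian group and 1 ≤ k ≤ r. For every instance X ∈ G^r, the probability mass of the planted distribution satisfies D1({X}) = (|G|·c(X)/C(r,k))·D0({X}), i.e., D1({X}) = c(X)/(C(r,k)·|G|^{r−1}). -/
open Finset

/-- The probability mass function of the uniform distribution `D0` on `G^r`. -/
noncomputable def D0pmf (G : Type) [Fintype G] (r : ℕ) (_X : Fin r → G) : ℝ :=
  1 / (Fintype.card G : ℝ) ^ r

/-!
Fix a nonempty `S` with least element `m`. Planting at `S` only overwrites coordinate `m`, and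
always yields an instance whose entries over `S` sum to zero. Conversely an instance `X` with
`∑_{i∈S} X i = 0` is planted at `S` from exactly `|G|` seeds `Y`: those agreeing with `X` off `m`,
with `Y m` arbitrary. Summing over the `k`-subsets `S`, the pairs `(Y, S)` producing `X` number
`|G| · c(X)` among `|G|^r · C(r,k)`.
-/

section Planting

variable {G : Type} [AddCommGroup G] {r : ℕ}

theorem plant_of_nonempty {S : Finset (Fin r)} (hS : S.Nonempty) (Y : Fin r → G) :
    plant Y S = Function.update Y (S.min' hS) (-∑ i ∈ S.erase (S.min' hS), Y i) := by
  funext j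
  simp only [plant, hS, dite_true, Function.update_apply]

theorem plant_eq_iff {S : Finset (Fin r)} (hS : S.Nonempty) (X Y : Fin r → G) :
    plant Y S = X ↔ (∀ j ≠ S.min' hS, Y j = X j) ∧ ∑ i ∈ S, X i = 0 := by
  set m := S.min' hS
  rw [plant_of_nonempty hS, Function.update_eq_iff, and_comm]
  refine and_congr_right fun hoff => ?_
  have hsum : ∑ i ∈ S.erase m, Y i = ∑ i ∈ S.erase m, X i :=
    sum_congr rfl fun i hi => hoff i (ne_of_mem_erase hi)
  rw [hsum, ← add_sum_erase S X (S.min'_mem hS), neg_eq_iff_add_eq_zero, add_comm]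

variable [Fintype G] [DecidableEq G]

theorem card_filter_plant_eq {S : Finset (Fin r)} (hS : S.Nonempty) (X : Fin r → G) :
    #{Y | plant Y S = X} = if ∑ i ∈ S, X i = 0 then Fintype.card G else 0 := by
  split_ifs with hsum
  · have hfiber : ({Y | plant Y S = X} : Finset (Fin r → G)) =
        univ.image (Function.update X (S.min' hS)) := by
      ext Y
      simp [plant_eq_iff hS, hsum, eq_comm (b := Y), Function.eq_update_iff]
    rw [hfiber, card_image_of_injective _ (Function.update_injective X _), card_univ]
  · simp [plant_eq_iff hS, hsum]

theorem card_planted_pairs {k : ℕ} (hk : 1 ≤ k) (X : Fin r → G) :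
    #{p : (Fin r → G) × Finset (Fin r) | #p.2 = k ∧ plant p.1 p.2 = X}
      = Fintype.card G * numSol k X := by
  have hfiber (S : Finset (Fin r)) : #{Y : Fin r → G | #S = k ∧ plant Y S = X} =
      if S ∈ {S ∈ powersetCard k (univ : Finset (Fin r)) | ∑ i ∈ S, X i = 0}
      then Fintype.card G else 0 := by
    by_cases hS : #S = k
    · simp only [hS, true_and, card_filter_plant_eq (card_pos.mp (hS ▸ hk)), mem_filter,
        mem_powersetCard_univ]
    · simp [hS]
  rw [card_filter, Fintype.sum_prod_type_right]
  simp only [← card_filter, hfiber]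
  rw [sum_ite_mem, univ_inter, sum_const, smul_eq_mul, mul_comm, numSol]

end Planting

theorem D1pmf_explicit_general
    (G : Type) [AddCommGroup G] [Fintype G] [DecidableEq G]
    (k r : ℕ) (hk : 1 ≤ k) (X : Fin r → G) :
    D1pmf k X
        = ((Fintype.card G : ℝ) * (numSol k X : ℝ) / (r.choose k : ℝ)) * D0pmf G r X
    ∧ D1pmf k X
        = (numSol k X : ℝ) / ((r.choose k : ℝ) * (Fintype.card G : ℝ) ^ (r - 1)) := by
  have hD1 : D1pmf k X = Fintype.card G * numSol k X / (Fintype.card G ^ r * r.choose k) := by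
    rw [D1pmf, card_planted_pairs hk X, Nat.cast_mul]
  refine ⟨by rw [hD1, D0pmf]; ring, ?_⟩
  rcases r with _ | r
  · simp [hD1, Nat.choose_eq_zero_of_lt hk]
  · have hG : (Fintype.card G : ℝ) ≠ 0 := by positivity
    rw [hD1, Nat.add_sub_cancel, pow_succ']
    field_simp

/-- **Explicit pmf of the planted distribution.**
For every instance `X ∈ G^r`,
`D1({X}) = (|G|·c(X)/C(r,k))·D0({X})`, i.e. `D1({X}) = c(X)/(C(r,k)·|G|^{r−1})`. -/
theorem D1pmf_explicit
    (G : Type) [AddCommGroup G] [Fintype G] [DecidableEq G]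
    (k r : ℕ) (hk : 1 ≤ k) (hkr : k ≤ r) (X : Fin r → G) :
    D1pmf k X
        = ((Fintype.card G : ℝ) * (numSol k X : ℝ) / (r.choose k : ℝ)) * D0pmf G r X
    ∧ D1pmf k X
        = (numSol k X : ℝ) / ((r.choose k : ℝ) * (Fintype.card G : ℝ) ^ (r - 1)) :=
  D1pmf_explicit_general G k r hk X
end

section
/- Let G be a finite abelian group, 1 ≤ k ≤ r, and ℓ ≥ 0. For every instance X ∈ G^r, D^ℓ({X}) ≤ ( ℓ·|G|/C(r,k) + Pr_{Y∼D1}[c(Y) > ℓ] ) · D0({X}); consequently, for every event E ⊆ G^r, D0(E) ≥ D^ℓ(E) / ( ℓ·|G|/C(r,k) + Pr_{Y∼D1}[c(Y) > ℓ] ). -/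
/-! A planted instance `X` is produced by a pair `(Y, S)` only if `S` is a solution of `X`, and
`Y` is then determined by `X`, `S` and the one entry `Y (min S)` that planting overwrites. Hence
`D1({X}) ≤ c(X)·|G| / (C(r,k)·|G|^r)`, which is at most `ℓ·|G|/C(r,k) · D0({X})` when `c(X) ≤ ℓ`;
the other part of `D^ℓ` is `Pr[c > ℓ]·D0` by construction. Summing over `E` gives the event bound. -/

open Finset

/-- `Pr_{Y∼D1}[c(Y) > ℓ]`: the probability under the planted distribution that
the number of solutions exceeds the real threshold `ℓ`. -/
noncomputable def D1probGt (G : Type) [AddCommGroup G] [Fintype G] [DecidableEq G]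
    (k r : ℕ) (ℓ : ℝ) : ℝ :=
  ∑ X ∈ (univ : Finset (Fin r → G)).filter (fun X => ℓ < (numSol k X : ℝ)), D1pmf k X

/-- The probability mass function of the hybrid distribution `D^ℓ` on `G^r`:
draw `X` from `D1`; if `c(X) ≤ ℓ` output `X`, otherwise output an independent
uniform sample from `G^r`. -/
noncomputable def Dhybpmf (G : Type) [AddCommGroup G] [Fintype G] [DecidableEq G]
    (k r : ℕ) (ℓ : ℝ) (X : Fin r → G) : ℝ :=
  (if (numSol k X : ℝ) ≤ ℓ then D1pmf k X else 0) + D1probGt G k r ℓ * D0pmf G r X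

/-- Probability of an event `E` under the uniform distribution `D0` on `G^r`. -/
noncomputable def D0prob (G : Type) [Fintype G] {r : ℕ} (E : Finset (Fin r → G)) : ℝ :=
  (E.card : ℝ) / (Fintype.card G : ℝ) ^ r

/-- Probability of an event `E` under the hybrid distribution `D^ℓ`. -/
noncomputable def Dhybprob (G : Type) [AddCommGroup G] [Fintype G] [DecidableEq G]
    (k : ℕ) {r : ℕ} (ℓ : ℝ) (E : Finset (Fin r → G)) : ℝ :=
  ∑ X ∈ E, Dhybpmf G k r ℓ X

section Plant

variable {G : Type} [AddCommGroup G] {r : ℕ}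

lemma plant_empty (Y : Fin r → G) : plant Y ∅ = Y := by
  funext j
  simp [plant]

lemma plant_apply_of_ne {Y : Fin r → G} {S : Finset (Fin r)} (hS : S.Nonempty) {j : Fin r}
    (hj : j ≠ S.min' hS) : plant Y S j = Y j := by
  simp [plant, hS, hj]

lemma sum_plant (Y : Fin r → G) (S : Finset (Fin r)) : ∑ i ∈ S, plant Y S i = 0 := by
  rcases S.eq_empty_or_nonempty with rfl | hS
  · simp
  rw [← add_sum_erase _ _ (S.min'_mem hS),
    sum_congr rfl fun i hi => plant_apply_of_ne hS (ne_of_mem_erase hi)]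
  simp [plant, hS]

lemma eq_of_plant_eq {Y Y' : Fin r → G} {S : Finset (Fin r)} (h : plant Y S = plant Y' S)
    (hmin : ∀ hS : S.Nonempty, Y (S.min' hS) = Y' (S.min' hS)) : Y = Y' := by
  rcases S.eq_empty_or_nonempty with rfl | hS
  · simpa [plant_empty] using h
  funext j
  by_cases hj : j = S.min' hS
  · exact hj ▸ hmin hS
  · simpa [plant_apply_of_ne hS hj] using congrFun h j

lemma card_plant_preimage_le [Fintype G] [DecidableEq G] (k : ℕ) (X : Fin r → G) :
    #{p : (Fin r → G) × Finset (Fin r) | p.2.card = k ∧ plant p.1 p.2 = X}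
      ≤ numSol k X * Fintype.card G := by
  let overwritten (p : (Fin r → G) × Finset (Fin r)) : Finset (Fin r) × G :=
    (p.2, if hS : p.2.Nonempty then p.1 (p.2.min' hS) else 0)
  calc _ ≤ #((powersetCard k univ).filter (fun S => ∑ i ∈ S, X i = 0) ×ˢ (univ : Finset G)) := by
        refine card_le_card_of_injOn overwritten ?_ ?_
        · rintro ⟨Y, S⟩ hp
          simp only [coe_filter, mem_univ, true_and, Set.mem_ofPred_eq] at hp
          obtain ⟨hcard, rfl⟩ := hp
          simp [overwritten, hcard, sum_plant]
        · rintro ⟨Y, S⟩ hp ⟨Y', S'⟩ hp' hf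
          simp only [coe_filter, mem_univ, true_and, Set.mem_ofPred_eq] at hp hp'
          obtain ⟨rfl, hval⟩ := Prod.ext_iff.mp hf
          refine Prod.ext (eq_of_plant_eq (hp.2.trans hp'.2.symm) fun hS => ?_) rfl
          simpa [overwritten, hS] using hval
    _ = numSol k X * Fintype.card G := by rw [card_product, card_univ, numSol]

end Plant

section Distributions

variable {G : Type} [AddCommGroup G] [Fintype G] [DecidableEq G] {k r : ℕ}

lemma D1pmf_nonneg (X : Fin r → G) : 0 ≤ D1pmf k X := by
  unfold D1pmf
  positivity

lemma D1probGt_nonneg (ℓ : ℝ) : 0 ≤ D1probGt G k r ℓ :=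
  sum_nonneg fun X _ => D1pmf_nonneg X

lemma D1pmf_le (X : Fin r → G) :
    D1pmf k X ≤ numSol k X * Fintype.card G / ((Fintype.card G : ℝ) ^ r * (r.choose k : ℝ)) := by
  unfold D1pmf
  gcongr
  exact_mod_cast card_plant_preimage_le k X

lemma Dhybpmf_le {ℓ : ℝ} (hℓ : 0 ≤ ℓ) (X : Fin r → G) :
    Dhybpmf G k r ℓ X
      ≤ (ℓ * Fintype.card G / r.choose k + D1probGt G k r ℓ) * D0pmf G r X := by
  rw [Dhybpmf, add_mul]
  gcongr
  have hbound : ℓ * Fintype.card G / r.choose k * D0pmf G r X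
      = ℓ * Fintype.card G / ((Fintype.card G : ℝ) ^ r * (r.choose k : ℝ)) := by
    rw [D0pmf, div_mul_div_comm, mul_one, mul_comm (r.choose k : ℝ)]
  split_ifs with hX
  · rw [hbound]
    exact (D1pmf_le X).trans (by gcongr)
  · unfold D0pmf
    positivity

end Distributions

lemma D0prob_eq_sum {G : Type} [Fintype G] {r : ℕ} (E : Finset (Fin r → G)) :
    D0prob G E = ∑ X ∈ E, D0pmf G r X := by
  simp only [D0prob, D0pmf, sum_const, nsmul_eq_mul, mul_one_div]

theorem Dhyb_renyi_bound_general
    (G : Type) [AddCommGroup G] [Fintype G] [DecidableEq G]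
    (k r : ℕ) (ℓ : ℝ) (hℓ : 0 ≤ ℓ) :
    (∀ X : Fin r → G,
        Dhybpmf G k r ℓ X
          ≤ (ℓ * (Fintype.card G : ℝ) / (r.choose k : ℝ) + D1probGt G k r ℓ)
              * D0pmf G r X)
    ∧ (∀ E : Finset (Fin r → G),
        Dhybprob G k ℓ E
            / (ℓ * (Fintype.card G : ℝ) / (r.choose k : ℝ) + D1probGt G k r ℓ)
          ≤ D0prob G E) := by
  have hfactor : 0 ≤ ℓ * (Fintype.card G : ℝ) / (r.choose k : ℝ) + D1probGt G k r ℓ := by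
    have := D1probGt_nonneg (G := G) (k := k) (r := r) ℓ
    positivity
  refine ⟨Dhybpmf_le hℓ, fun E => div_le_of_le_mul₀ hfactor (by unfold D0prob; positivity) ?_⟩
  rw [D0prob_eq_sum, sum_mul]
  exact sum_le_sum fun X _ => (Dhybpmf_le hℓ X).trans_eq (mul_comm _ _)

/-- **Rényi-divergence bound between `D^ℓ` and `D0`.**
For every `X ∈ G^r`, `D^ℓ({X}) ≤ (ℓ·|G|/C(r,k) + Pr_{Y∼D1}[c(Y) > ℓ])·D0({X})`;
consequently, for every event `E ⊆ G^r`,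
`D0(E) ≥ D^ℓ(E) / (ℓ·|G|/C(r,k) + Pr_{Y∼D1}[c(Y) > ℓ])`. -/
theorem Dhyb_renyi_bound
    (G : Type) [AddCommGroup G] [Fintype G] [DecidableEq G]
    (k r : ℕ) (hk : 1 ≤ k) (hkr : k ≤ r) (ℓ : ℝ) (hℓ : 0 ≤ ℓ) :
    (∀ X : Fin r → G,
        Dhybpmf G k r ℓ X
          ≤ (ℓ * (Fintype.card G : ℝ) / (r.choose k : ℝ) + D1probGt G k r ℓ)
              * D0pmf G r X)
    ∧ (∀ E : Finset (Fin r → G),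
        Dhybprob G k ℓ E
            / (ℓ * (Fintype.card G : ℝ) / (r.choose k : ℝ) + D1probGt G k r ℓ)
          ≤ D0prob G E) :=
  Dhyb_renyi_bound_general G k r ℓ hℓ
end
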